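/- arXiv:0905.2830 — 2 statements merged into one kernel-verified Lean document; each statement's English description precedes it below -/
import Mathlib

section
/- Let 𝒦₀ be the complex inner-product space of finitely supported functions on ℤ × I_q × I_q, with orthonormal basis {f_{m,p,t} : m ∈ ℤ, p,t ∈ I_q} (with the convention f_{m,p,t} = 0 whenever p ∉ I_q or t ∉ I_q). Define linear operators on 𝒦₀ by K₀ f_{m,p,t} = q^{-m/2}·|p/t|^{1/2}·f_{m,p,t}; (q − q⁻¹)·E₀ f_{m,p,t} = sgn(t)·q^{-(m-1)/2}·|p/t|^{1/2}·√(1+κ(q⁻¹t))·f_{m-1,p,q⁻¹t} − sgn(p)·q^{(m-1)/2}·|t/p|^{1/2}·√(1+κ(p))·f_{m-1,qp,t}; and (q − q⁻¹)·E₀† f_{m,p,t} = sgn(t)·q^{-(m+1)/2}·|p/t|^{1/2}·√(1+κ(t))·f_{m+1,p,qt} − sgn(p)·q^{(m+1)/2}·|t/p|^{1/2}·√(1+κ(q⁻¹p))·f_{m+1,q⁻¹p,t}. Then: (a) K₀ is invertible on 𝒦₀ and K₀E₀ = q·E₀K₀; (b) E₀†E₀ − E₀E₀† = (K₀² − K₀⁻²)/(q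 − q⁻¹) as operators on 𝒦₀; (c) the operators K₀^m E₀^k (E₀†)^l, for m ∈ ℤ and k,l ∈ ℕ₀, are linearly independent over ℂ. -/
open scoped Classical

noncomputable section

/-- The set `I_q = -q^ℕ ∪ q^ℤ`. -/
def Iq (q : ℝ) : Set ℝ :=
  {x | (∃ k : ℕ, x = -q ^ (k + 1)) ∨ ∃ k : ℤ, x = q ^ k}

/-- `κ(x) = sgn(x)·x²`. -/
def kappa (x : ℝ) : ℝ := Real.sign x * x ^ 2

/-- The space `𝒦₀` of finitely supported functions on `ℤ × I_q × I_q`. -/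
abbrev KSpace (q : ℝ) : Type := (ℤ × ↥(Iq q) × ↥(Iq q)) →₀ ℂ

/-- The basis vector `f_{m,p,t}`, with the convention `f_{m,p,t} = 0` when
`p ∉ I_q` or `t ∉ I_q`. -/
def fvec (q : ℝ) (m : ℤ) (p t : ℝ) : KSpace q :=
  if hp : p ∈ Iq q then
    if ht : t ∈ Iq q then Finsupp.single (m, ⟨p, hp⟩, ⟨t, ht⟩) 1 else 0
  else 0

/-- Extend an assignment on basis vectors to a linear operator on `𝒦₀`. -/
def extendOp (q : ℝ) (g : ℤ × ↥(Iq q) × ↥(Iq q) → KSpace q) :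
    Module.End ℂ (KSpace q) :=
  Finsupp.lsum ℂ fun idx => LinearMap.toSpanSingleton ℂ (KSpace q) (g idx)

/-- `K₀ f_{m,p,t} = q^{-m/2}·|p/t|^{1/2}·f_{m,p,t}`. -/
def K0 (q : ℝ) : Module.End ℂ (KSpace q) :=
  extendOp q fun idx =>
    ((Real.sqrt q ^ (-idx.1) * Real.sqrt |(idx.2.1 : ℝ) / (idx.2.2 : ℝ)| : ℝ) : ℂ) •
      fvec q idx.1 (idx.2.1 : ℝ) (idx.2.2 : ℝ)

/-- The inverse of `K₀`: `f_{m,p,t} ↦ q^{m/2}·|t/p|^{1/2}·f_{m,p,t}`. -/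
def K0inv (q : ℝ) : Module.End ℂ (KSpace q) :=
  extendOp q fun idx =>
    ((Real.sqrt q ^ idx.1 * Real.sqrt |(idx.2.2 : ℝ) / (idx.2.1 : ℝ)| : ℝ) : ℂ) •
      fvec q idx.1 (idx.2.1 : ℝ) (idx.2.2 : ℝ)

/-- `(q - q⁻¹)·E₀ f_{m,p,t} = sgn(t)·q^{-(m-1)/2}·|p/t|^{1/2}·√(1+κ(q⁻¹t))·f_{m-1,p,q⁻¹t}
    − sgn(p)·q^{(m-1)/2}·|t/p|^{1/2}·√(1+κ(p))·f_{m-1,qp,t}`. -/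
def E0 (q : ℝ) : Module.End ℂ (KSpace q) :=
  extendOp q fun idx =>
    (((q - q⁻¹)⁻¹ : ℝ) : ℂ) •
      (((Real.sign (idx.2.2 : ℝ) * Real.sqrt q ^ (1 - idx.1) *
            Real.sqrt |(idx.2.1 : ℝ) / (idx.2.2 : ℝ)| *
            Real.sqrt (1 + kappa ((idx.2.2 : ℝ) / q)) : ℝ) : ℂ) •
          fvec q (idx.1 - 1) (idx.2.1 : ℝ) ((idx.2.2 : ℝ) / q) -
        ((Real.sign (idx.2.1 : ℝ) * Real.sqrt q ^ (idx.1 - 1) *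
            Real.sqrt |(idx.2.2 : ℝ) / (idx.2.1 : ℝ)| *
            Real.sqrt (1 + kappa (idx.2.1 : ℝ)) : ℝ) : ℂ) •
          fvec q (idx.1 - 1) (q * (idx.2.1 : ℝ)) (idx.2.2 : ℝ))

/-- `(q - q⁻¹)·E₀† f_{m,p,t} = sgn(t)·q^{-(m+1)/2}·|p/t|^{1/2}·√(1+κ(t))·f_{m+1,p,qt}
    − sgn(p)·q^{(m+1)/2}·|t/p|^{1/2}·√(1+κ(q⁻¹p))·f_{m+1,q⁻¹p,t}`. -/
def E0dag (q : ℝ) : Module.End ℂ (KSpace q) :=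
  extendOp q fun idx =>
    (((q - q⁻¹)⁻¹ : ℝ) : ℂ) •
      (((Real.sign (idx.2.2 : ℝ) * Real.sqrt q ^ (-(1 + idx.1)) *
            Real.sqrt |(idx.2.1 : ℝ) / (idx.2.2 : ℝ)| *
            Real.sqrt (1 + kappa (idx.2.2 : ℝ)) : ℝ) : ℂ) •
          fvec q (idx.1 + 1) (idx.2.1 : ℝ) (q * (idx.2.2 : ℝ)) -
        ((Real.sign (idx.2.1 : ℝ) * Real.sqrt q ^ (idx.1 + 1) *
            Real.sqrt |(idx.2.2 : ℝ) / (idx.2.1 : ℝ)| *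
            Real.sqrt (1 + kappa ((idx.2.1 : ℝ) / q)) : ℝ) : ℂ) •
          fvec q (idx.1 + 1) ((idx.2.1 : ℝ) / q) (idx.2.2 : ℝ))

/-- `K₀^m` for `m ∈ ℤ`, using the inverse `K₀⁻¹` for negative powers. -/
def K0zpow (q : ℝ) (m : ℤ) : Module.End ℂ (KSpace q) :=
  if 0 ≤ m then K0 q ^ m.toNat else K0inv q ^ (-m).toNat

end

/-!
Everything is read off the action on the basis `f_{m,p,t}`, on which `K₀` is diagonal with
weight `λ = q^{-m/2}|p/t|^{1/2}`. Both vectors produced by `E₀ f_{m,p,t}` have weight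
`qλ`, which is (a). For (b) the two off-diagonal terms of `E₀†E₀ - E₀E₀†` cancel, and on the
diagonal `√(1+κ x)² = 1+κ x` (valid because `x ≥ -1` at every point that occurs) turns the four
squared coefficients into `(q - q⁻¹)(λ² - λ⁻²)/(q - q⁻¹)²`.

For (c) apply `K₀^m E₀^k (E₀†)^l` to `f_{0,-q,-q^{n+1}}`. Since `κ(-1) = -1`, `E₀†` maps
`f_{a,-q,t}` to a nonzero multiple of `f_{a+1,-q,qt}` alone, while `E₀` either moves `p` to `qp`
or enlarges `|t|`. Hence, if `L` is the largest `l` in a vanishing combination, the coordinate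
at `(L-k, -q^{k+1}, -q^{n+L+1})` only sees the terms with `(k, l) = (k, L)`, and equals
`c_n ∑ₘ g_{m,k,L} λ_n^m` with `λ_n = λ_0 q^{-n/2}`: a Vandermonde argument in `n` kills all of
these coefficients.
-/

theorem eq_zero_of_forall_sum_mul_pow_eq_zero {ι K : Type*} [Field K] {s : Finset ι}
    {z : ι → K} (hz : Set.InjOn z s) {d : ι → K} (h : ∀ n : ℕ, ∑ i ∈ s, d i * z i ^ n = 0)
    {i : ι} (hi : i ∈ s) : d i = 0 := by
  have hli := (linearIndependent_monoidHom (Multiplicative ℕ) K).comp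
    (fun j : s => powersHom K (z j)) fun j j' hjj' =>
      Subtype.ext (hz j.2 j'.2 ((powersHom K).injective hjj'))
  refine Fintype.linearIndependent_iff.1 hli (fun j => d j) (funext fun n => ?_) ⟨i, hi⟩
  simpa [Finset.sum_apply, ← Finset.sum_attach s (fun j => d j * z j ^ n.toAdd)] using h n.toAdd

theorem Finsupp.supported_le_comap_of_single_mem {α R : Type*} [Semiring R]
    {f : (α →₀ R) →ₗ[R] α →₀ R} {s : Set α} (h : ∀ i ∈ s, f (single i 1) ∈ supported R R s) :
    supported R R s ≤ (supported R R s).comap f := by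
  refine (supported_eq_span_single R s).trans_le (Submodule.span_le.2 ?_)
  rintro _ ⟨i, hi, rfl⟩
  exact h i hi

theorem Module.End.pow_apply_of_apply_eq_smul {R M : Type*} [CommSemiring R] [AddCommMonoid M]
    [Module R M] {f : Module.End R M} {μ : R} {v : M} (h : f v = μ • v) (n : ℕ) :
    (f ^ n) v = μ ^ n • v := by
  induction n with
  | zero => simp
  | succ n ih => rw [pow_succ', Module.End.mul_apply, ih, map_smul, h, smul_smul, ← pow_succ]

theorem kappa_neg_one : kappa (-1) = -1 := by
  norm_num [kappa, Real.sign_of_neg]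

theorem one_add_kappa_nonneg {x : ℝ} (hx : -1 ≤ x) : 0 ≤ 1 + kappa x := by
  rcases lt_trichotomy x 0 with h | rfl | h
  · rw [kappa, Real.sign_of_neg h]; nlinarith
  · simp [kappa]
  · rw [kappa, Real.sign_of_pos h]; positivity

theorem one_add_kappa_pos {x : ℝ} (hx : -1 < x) : 0 < 1 + kappa x := by
  rcases lt_trichotomy x 0 with h | rfl | h
  · rw [kappa, Real.sign_of_neg h]; nlinarith
  · simp [kappa]
  · rw [kappa, Real.sign_of_pos h]; positivity

theorem Real.sign_mul_of_pos {c : ℝ} (hc : 0 < c) (x : ℝ) : Real.sign (c * x) = Real.sign x := by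
  rcases lt_trichotomy x 0 with h | rfl | h
  · rw [Real.sign_of_neg h, Real.sign_of_neg (mul_neg_of_pos_of_neg hc h)]
  · rw [mul_zero]
  · rw [Real.sign_of_pos h, Real.sign_of_pos (mul_pos hc h)]

theorem Real.sign_div_of_pos {c : ℝ} (hc : 0 < c) (x : ℝ) : Real.sign (x / c) = Real.sign x := by
  rw [div_eq_inv_mul, Real.sign_mul_of_pos (inv_pos.2 hc)]

theorem Real.sign_sq_of_ne_zero {x : ℝ} (hx : x ≠ 0) : Real.sign x ^ 2 = 1 := by
  rcases Real.sign_apply_eq_of_ne_zero x hx with h | h <;> rw [h] <;> norm_num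

theorem kappa_div_of_pos {c : ℝ} (hc : 0 < c) (x : ℝ) : kappa (x / c) = kappa x / c ^ 2 := by
  rw [kappa, kappa, Real.sign_div_of_pos hc, div_pow, mul_div_assoc]

section

variable {q : ℝ}

theorem neg_pow_succ_mem_Iq (k : ℕ) : -q ^ (k + 1) ∈ Iq q :=
  Or.inl ⟨k, rfl⟩

theorem ne_zero_of_mem_Iq (hq0 : 0 < q) {x : ℝ} (hx : x ∈ Iq q) : x ≠ 0 := by
  rcases hx with ⟨k, rfl⟩ | ⟨k, rfl⟩
  · exact neg_ne_zero.2 (pow_pos hq0 _).ne'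
  · exact (zpow_pos hq0 _).ne'

theorem neg_le_of_mem_Iq (hq0 : 0 < q) (hq1 : q ≤ 1) {x : ℝ} (hx : x ∈ Iq q) : -q ≤ x := by
  rcases hx with ⟨k, rfl⟩ | ⟨k, rfl⟩
  · rw [neg_le_neg_iff, pow_succ]
    exact mul_le_of_le_one_left hq0.le (pow_le_one₀ hq0.le hq1)
  · linarith [zpow_pos hq0 k]

theorem mul_mem_Iq (hq0 : 0 < q) {x : ℝ} (hx : x ∈ Iq q) : q * x ∈ Iq q := by
  rcases hx with ⟨k, rfl⟩ | ⟨k, rfl⟩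
  · exact Or.inl ⟨k + 1, by ring⟩
  · exact Or.inr ⟨k + 1, by rw [zpow_add_one₀ hq0.ne', mul_comm]⟩

theorem mem_Iq_of_div_mem (hq0 : 0 < q) {x : ℝ} (hx : x / q ∈ Iq q) : x ∈ Iq q := by
  simpa [mul_div_cancel₀ x hq0.ne'] using mul_mem_Iq hq0 hx

theorem mem_Iq_of_mul_mem (hq0 : 0 < q) {x : ℝ} (hx : q * x ∈ Iq q) (hx1 : x ≠ -1) :
    x ∈ Iq q := by
  rcases hx with ⟨_ | k, hk⟩ | ⟨k, hk⟩
  · exact absurd (mul_left_cancel₀ hq0.ne' (hk.trans (by ring))) hx1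
  · exact Or.inl ⟨k, mul_left_cancel₀ hq0.ne' (hk.trans (by ring))⟩
  · refine Or.inr ⟨k - 1, mul_left_cancel₀ hq0.ne' ?_⟩
    rw [hk, zpow_sub_one₀ hq0.ne']
    field_simp

theorem sub_inv_ne_zero_of_lt_one (hq0 : 0 < q) (hq1 : q < 1) : q - q⁻¹ ≠ 0 :=
  sub_ne_zero.2 (by linarith [(one_lt_inv₀ hq0).2 hq1])

theorem sqrt_one_add_kappa_neg_pow_pos (hq0 : 0 < q) (hq1 : q < 1) {J : ℕ} (hJ : J ≠ 0) :
    0 < √(1 + kappa (-q ^ J)) :=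
  Real.sqrt_pos.2 <| one_add_kappa_pos <| neg_lt_neg <| pow_lt_one₀ hq0.le hq1 hJ

theorem sq_sqrt_one_add_kappa (hq0 : 0 < q) (hq1 : q ≤ 1) {x : ℝ} (hx : x ∈ Iq q) :
    √(1 + kappa x) ^ 2 = 1 + kappa x :=
  Real.sq_sqrt <| one_add_kappa_nonneg <| by linarith [neg_le_of_mem_Iq hq0 hq1 hx]

theorem sq_sqrt_one_add_kappa_div (hq0 : 0 < q) (hq1 : q ≤ 1) {x : ℝ} (hx : x ∈ Iq q) :
    √(1 + kappa (x / q)) ^ 2 = 1 + kappa x / q ^ 2 := by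
  rw [Real.sq_sqrt, kappa_div_of_pos hq0]
  refine one_add_kappa_nonneg ?_
  rw [le_div_iff₀ hq0, neg_one_mul]
  exact neg_le_of_mem_Iq hq0 hq1 hx

noncomputable def K0eig (q : ℝ) (m : ℤ) (p t : ℝ) : ℝ := √q ^ (-m) * √|p / t|

theorem K0eig_pos (hq0 : 0 < q) (m : ℤ) {p t : ℝ} (hp : p ≠ 0) (ht : t ≠ 0) :
    0 < K0eig q m p t :=
  mul_pos (zpow_pos (Real.sqrt_pos.2 hq0) _) (Real.sqrt_pos.2 (abs_pos.2 (div_ne_zero hp ht)))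

theorem K0eig_sub_one (hq0 : 0 < q) (m : ℤ) (p t : ℝ) :
    K0eig q (m - 1) p t = √q * K0eig q m p t := by
  rw [K0eig, K0eig, neg_sub, sub_eq_neg_add, zpow_add_one₀ (Real.sqrt_pos.2 hq0).ne']
  ring

theorem K0eig_add_one (hq0 : 0 < q) (m : ℤ) (p t : ℝ) :
    K0eig q (m + 1) p t = K0eig q m p t / √q := by
  rw [K0eig, K0eig, neg_add, zpow_add₀ (Real.sqrt_pos.2 hq0).ne', zpow_neg_one]
  ring

theorem K0eig_mul_left (hq0 : 0 < q) (m : ℤ) (p t : ℝ) :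
    K0eig q m (q * p) t = √q * K0eig q m p t := by
  rw [K0eig, K0eig, mul_div_assoc, abs_mul, abs_of_pos hq0, Real.sqrt_mul hq0.le]
  ring

theorem K0eig_div_right (hq0 : 0 < q) (m : ℤ) (p t : ℝ) :
    K0eig q m p (t / q) = √q * K0eig q m p t := by
  rw [← K0eig_mul_left hq0, K0eig, K0eig, div_div_eq_mul_div, mul_comm p]

theorem K0eig_div_left (hq0 : 0 < q) (m : ℤ) (p t : ℝ) :
    K0eig q m (p / q) t = K0eig q m p t / √q := by
  rw [K0eig, K0eig, div_right_comm, abs_div, abs_of_pos hq0, Real.sqrt_div' _ hq0.le]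
  ring

theorem K0eig_mul_right (hq0 : 0 < q) (m : ℤ) (p t : ℝ) :
    K0eig q m p (q * t) = K0eig q m p t / √q := by
  rw [← K0eig_div_left hq0, K0eig, K0eig, div_right_comm, div_div, mul_comm t]

theorem K0eig_pow_mul_right (hq0 : 0 < q) (m : ℤ) (p t : ℝ) (n : ℕ) :
    K0eig q m p (q ^ n * t) = K0eig q m p t / √q ^ n := by
  induction n with
  | zero => simp
  | succ n ih => rw [pow_succ', mul_assoc, K0eig_mul_right hq0, ih, pow_succ', div_div, mul_comm]

theorem K0eig_neg_pow_zpow (hq0 : 0 < q) (s : ℤ) (p : ℝ) (n L : ℕ) (m : ℤ) :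
    K0eig q s p (-q ^ (n + L + 1)) ^ m = K0eig q s p (-q ^ (L + 1)) ^ m * (√q ^ (-m)) ^ n := by
  rw [show -q ^ (n + L + 1) = q ^ n * -q ^ (L + 1) by ring, K0eig_pow_mul_right hq0, div_zpow,
    div_eq_mul_inv]
  congr 1
  rw [← zpow_neg, ← zpow_natCast, ← zpow_natCast (√q ^ (-m)), ← zpow_mul, ← zpow_mul, mul_comm,
    neg_mul]

theorem K0eig_inv (m : ℤ) (p t : ℝ) : (K0eig q m p t)⁻¹ = √q ^ m * √|t / p| := by
  rw [K0eig, mul_inv, ← zpow_neg, neg_neg, ← Real.sqrt_inv, ← abs_inv, inv_div]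

theorem fvec_of_mem (m : ℤ) {p t : ℝ} (hp : p ∈ Iq q) (ht : t ∈ Iq q) :
    fvec q m p t = Finsupp.single (m, ⟨p, hp⟩, ⟨t, ht⟩) 1 := by
  rw [fvec, dif_pos hp, dif_pos ht]

theorem fvec_of_not_mem_left (m : ℤ) {p : ℝ} (hp : p ∉ Iq q) (t : ℝ) : fvec q m p t = 0 := by
  rw [fvec, dif_neg hp]

theorem fvec_of_not_mem_right (m : ℤ) (p : ℝ) {t : ℝ} (ht : t ∉ Iq q) : fvec q m p t = 0 := by
  unfold fvec
  split_ifs <;> rfl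

theorem single_eq_fvec (i : ℤ × Iq q × Iq q) : Finsupp.single i 1 = fvec q i.1 i.2.1 i.2.2 :=
  (fvec_of_mem i.1 i.2.1.2 i.2.2.2).symm

theorem KSpace.end_ext {A B : Module.End ℂ (KSpace q)}
    (h : ∀ (m : ℤ) (p t : ℝ), p ∈ Iq q → t ∈ Iq q → A (fvec q m p t) = B (fvec q m p t)) :
    A = B :=
  Finsupp.lhom_ext' fun i => LinearMap.ext_ring <| by
    simpa only [LinearMap.comp_apply, Finsupp.lsingle_apply, single_eq_fvec] using
      h i.1 i.2.1 i.2.2 i.2.1.2 i.2.2.2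

theorem extendOp_fvec (g : ℤ × Iq q × Iq q → KSpace q) (m : ℤ) {p t : ℝ}
    (hp : p ∈ Iq q) (ht : t ∈ Iq q) : extendOp q g (fvec q m p t) = g (m, ⟨p, hp⟩, ⟨t, ht⟩) := by
  rw [fvec_of_mem m hp ht, extendOp, Finsupp.lsum_single, LinearMap.toSpanSingleton_apply,
    one_smul]

theorem K0_fvec (m : ℤ) (p t : ℝ) :
    K0 q (fvec q m p t) = (K0eig q m p t : ℂ) • fvec q m p t := by
  by_cases hp : p ∈ Iq q
  · by_cases ht : t ∈ Iq q
    · rw [K0, extendOp_fvec _ m hp ht, K0eig]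
    · simp [fvec_of_not_mem_right m p ht]
  · simp [fvec_of_not_mem_left m hp t]

theorem K0inv_fvec (m : ℤ) (p t : ℝ) :
    K0inv q (fvec q m p t) = (((K0eig q m p t)⁻¹ : ℝ) : ℂ) • fvec q m p t := by
  by_cases hp : p ∈ Iq q
  · by_cases ht : t ∈ Iq q
    · rw [K0inv, extendOp_fvec _ m hp ht, K0eig_inv]
    · simp [fvec_of_not_mem_right m p ht]
  · simp [fvec_of_not_mem_left m hp t]

theorem E0_fvec (hq0 : 0 < q) (m : ℤ) (p t : ℝ) :
    E0 q (fvec q m p t) = (((q - q⁻¹)⁻¹ : ℝ) : ℂ) •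
      (((Real.sign t * K0eig q (m - 1) p t * √(1 + kappa (t / q)) : ℝ) : ℂ) •
          fvec q (m - 1) p (t / q) -
        ((Real.sign p * (K0eig q (m - 1) p t)⁻¹ * √(1 + kappa p) : ℝ) : ℂ) •
          fvec q (m - 1) (q * p) t) := by
  by_cases hp : p ∈ Iq q
  · by_cases ht : t ∈ Iq q
    · rw [E0, extendOp_fvec _ m hp ht, K0eig_inv]
      simp only [K0eig, neg_sub, mul_assoc]
    · have ht' : t / q ∉ Iq q := fun h => ht (mem_Iq_of_div_mem hq0 h)
      simp [fvec_of_not_mem_right _ _ ht, fvec_of_not_mem_right _ _ ht']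
  · by_cases hp' : q * p ∈ Iq q
    -- `f_{m-1,qp,t}` need not vanish here, but its coefficient does: `1 + κ(-1) = 0`.
    · obtain rfl : p = -1 := by_contra fun h => hp (mem_Iq_of_mul_mem hq0 hp' h)
      simp [fvec_of_not_mem_left _ hp, kappa_neg_one]
    · simp [fvec_of_not_mem_left _ hp, fvec_of_not_mem_left _ hp']

theorem E0dag_fvec (hq0 : 0 < q) (m : ℤ) (p t : ℝ) :
    E0dag q (fvec q m p t) = (((q - q⁻¹)⁻¹ : ℝ) : ℂ) •
      (((Real.sign t * K0eig q (m + 1) p t * √(1 + kappa t) : ℝ) : ℂ) •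
          fvec q (m + 1) p (q * t) -
        ((Real.sign p * (K0eig q (m + 1) p t)⁻¹ * √(1 + kappa (p / q)) : ℝ) : ℂ) •
          fvec q (m + 1) (p / q) t) := by
  by_cases hp : p ∈ Iq q
  · by_cases ht : t ∈ Iq q
    · rw [E0dag, extendOp_fvec _ m hp ht, K0eig_inv]
      simp only [K0eig, add_comm 1 m, mul_assoc]
    · by_cases ht' : q * t ∈ Iq q
      · obtain rfl : t = -1 := by_contra fun h => ht (mem_Iq_of_mul_mem hq0 ht' h)
        simp [fvec_of_not_mem_right _ _ ht, kappa_neg_one]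
      · simp [fvec_of_not_mem_right _ _ ht, fvec_of_not_mem_right _ _ ht']
  · have hp' : p / q ∉ Iq q := fun h => hp (mem_Iq_of_div_mem hq0 h)
    simp [fvec_of_not_mem_left _ hp, fvec_of_not_mem_left _ hp']

theorem K0inv_mul_K0 (hq0 : 0 < q) : K0inv q * K0 q = 1 := by
  refine KSpace.end_ext fun m p t hp ht => ?_
  have hne := (K0eig_pos hq0 m (ne_zero_of_mem_Iq hq0 hp) (ne_zero_of_mem_Iq hq0 ht)).ne'
  rw [Module.End.mul_apply, K0_fvec, map_smul, K0inv_fvec, smul_smul, ← Complex.ofReal_mul,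
    mul_inv_cancel₀ hne, Complex.ofReal_one, one_smul, Module.End.one_apply]

theorem K0_mul_K0inv (hq0 : 0 < q) : K0 q * K0inv q = 1 := by
  refine KSpace.end_ext fun m p t hp ht => ?_
  have hne := (K0eig_pos hq0 m (ne_zero_of_mem_Iq hq0 hp) (ne_zero_of_mem_Iq hq0 ht)).ne'
  rw [Module.End.mul_apply, K0inv_fvec, map_smul, K0_fvec, smul_smul, ← Complex.ofReal_mul,
    inv_mul_cancel₀ hne, Complex.ofReal_one, one_smul, Module.End.one_apply]

theorem K0_mul_E0 (hq0 : 0 < q) : K0 q * E0 q = (q : ℂ) • (E0 q * K0 q) := by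
  refine KSpace.end_ext fun m p t hp ht => ?_
  have hW : ((√q : ℝ) : ℂ) * (√q : ℝ) = q := mod_cast Real.mul_self_sqrt hq0.le
  have hW0 : ((√q : ℝ) : ℂ) ≠ 0 := mod_cast (Real.sqrt_pos.2 hq0).ne'
  have hne : (K0eig q m p t : ℂ) ≠ 0 :=
    mod_cast (K0eig_pos hq0 m (ne_zero_of_mem_Iq hq0 hp) (ne_zero_of_mem_Iq hq0 ht)).ne'
  simp only [Module.End.mul_apply, LinearMap.smul_apply, K0_fvec, E0_fvec hq0, map_smul, map_sub,
    K0eig_mul_left hq0, K0eig_div_right hq0, K0eig_sub_one hq0]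
  match_scalars
  all_goals rw [← hW]; field_simp

theorem E0_commutator_diagonal (hq0 : 0 < q) (hq1 : q ≤ 1) {p t : ℝ} (hp : p ∈ Iq q)
    (ht : t ∈ Iq q) {Λ : ℝ} (hΛ : Λ ≠ 0) :
    (Real.sign t * (√q * Λ) * √(1 + kappa (t / q))) ^ 2 +
        (Real.sign p * (√q * Λ)⁻¹ * √(1 + kappa p)) ^ 2 -
      (Real.sign t * (Λ / √q) * √(1 + kappa t)) ^ 2 -
        (Real.sign p * (Λ / √q)⁻¹ * √(1 + kappa (p / q))) ^ 2 =
      (q - q⁻¹) * (Λ ^ 2 - Λ⁻¹ ^ 2) := by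
  have hW : √q ≠ 0 := (Real.sqrt_pos.2 hq0).ne'
  simp only [mul_pow, div_pow, inv_pow, Real.sign_sq_of_ne_zero (ne_zero_of_mem_Iq hq0 hp),
    Real.sign_sq_of_ne_zero (ne_zero_of_mem_Iq hq0 ht), Real.sq_sqrt hq0.le,
    sq_sqrt_one_add_kappa hq0 hq1 hp, sq_sqrt_one_add_kappa hq0 hq1 ht,
    sq_sqrt_one_add_kappa_div hq0 hq1 hp, sq_sqrt_one_add_kappa_div hq0 hq1 ht]
  field_simp
  ring

theorem E0dag_mul_E0_sub_E0_mul_E0dag (hq0 : 0 < q) (hq1 : q < 1) :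
    E0dag q * E0 q - E0 q * E0dag q = ((q : ℂ) - (q : ℂ)⁻¹)⁻¹ • (K0 q ^ 2 - K0inv q ^ 2) := by
  refine KSpace.end_ext fun m p t hp ht => ?_
  have hq : q ≠ 0 := hq0.ne'
  simp only [LinearMap.sub_apply, LinearMap.smul_apply, Module.End.mul_apply, pow_two,
    E0_fvec hq0, E0dag_fvec hq0, K0_fvec, K0inv_fvec, map_smul, map_sub,
    sub_add_cancel, add_sub_cancel_right, K0eig_sub_one hq0, K0eig_add_one hq0,
    K0eig_mul_left hq0, K0eig_div_right hq0, K0eig_div_left hq0, K0eig_mul_right hq0,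
    Real.sign_mul_of_pos hq0, Real.sign_div_of_pos hq0, mul_div_cancel₀ _ hq,
    mul_div_cancel_left₀ _ hq]
  set Λ := K0eig q m p t
  have hΛ : Λ ≠ 0 :=
    (K0eig_pos hq0 m (ne_zero_of_mem_Iq hq0 hp) (ne_zero_of_mem_Iq hq0 ht)).ne'
  have hW : √q ≠ 0 := (Real.sqrt_pos.2 hq0).ne'
  match_scalars
  · norm_cast
    have hA : (q - q⁻¹)⁻¹ * (q - q⁻¹) = 1 := inv_mul_cancel₀ (sub_inv_ne_zero_of_lt_one hq0 hq1)
    linear_combination (q - q⁻¹)⁻¹ ^ 2 * E0_commutator_diagonal hq0 hq1.le hp ht hΛ +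
      (q - q⁻¹)⁻¹ * (Λ ^ 2 - Λ⁻¹ ^ 2) * hA
  all_goals field_simp; ring

theorem K0zpow_fvec (m s : ℤ) (p t : ℝ) :
    K0zpow q m (fvec q s p t) = ((K0eig q s p t ^ m : ℝ) : ℂ) • fvec q s p t := by
  unfold K0zpow
  split_ifs with hm
  · rw [Module.End.pow_apply_of_apply_eq_smul (K0_fvec s p t), ← Complex.ofReal_pow,
      ← zpow_natCast, Int.toNat_of_nonneg hm]
  · rw [Module.End.pow_apply_of_apply_eq_smul (K0inv_fvec s p t), ← Complex.ofReal_pow,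
      ← zpow_natCast, Int.toNat_of_nonneg (by omega), inv_zpow', neg_neg]

noncomputable def supportedAbsTGe (q c : ℝ) : Submodule ℂ (KSpace q) :=
  Finsupp.supported ℂ ℂ {i | c ≤ |(i.2.2 : ℝ)|}

theorem fvec_mem_supportedAbsTGe (m : ℤ) (p : ℝ) {t c : ℝ} (h : c ≤ |t|) :
    fvec q m p t ∈ supportedAbsTGe q c := by
  by_cases hp : p ∈ Iq q
  · by_cases ht : t ∈ Iq q
    · rw [fvec_of_mem m hp ht]
      exact Finsupp.single_mem_supported ℂ _ h
    · rw [fvec_of_not_mem_right m p ht]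
      exact zero_mem _
  · rw [fvec_of_not_mem_left m hp t]
    exact zero_mem _

theorem K0zpow_mem_supportedAbsTGe (m : ℤ) {c : ℝ} {x : KSpace q}
    (hx : x ∈ supportedAbsTGe q c) : K0zpow q m x ∈ supportedAbsTGe q c := by
  refine Finsupp.supported_le_comap_of_single_mem (f := K0zpow q m) (fun i hi => ?_) hx
  rw [single_eq_fvec, K0zpow_fvec]
  exact Submodule.smul_mem _ _ (fvec_mem_supportedAbsTGe _ _ hi)

theorem E0_mem_supportedAbsTGe (hq0 : 0 < q) (hq1 : q ≤ 1) {c : ℝ} {x : KSpace q}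
    (hx : x ∈ supportedAbsTGe q c) : E0 q x ∈ supportedAbsTGe q c := by
  refine Finsupp.supported_le_comap_of_single_mem (f := E0 q) (fun i hi => ?_) hx
  have hi : c ≤ |(i.2.2 : ℝ)| := hi
  have hi' : c ≤ |(i.2.2 : ℝ) / q| := by
    rw [abs_div, abs_of_pos hq0, le_div_iff₀ hq0]
    nlinarith [abs_nonneg (i.2.2 : ℝ)]
  rw [single_eq_fvec, E0_fvec hq0]
  exact Submodule.smul_mem _ _ (sub_mem (Submodule.smul_mem _ _ (fvec_mem_supportedAbsTGe _ _ hi'))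
    (Submodule.smul_mem _ _ (fvec_mem_supportedAbsTGe _ _ hi)))

theorem E0dag_fvec_neg_q_neg_pow (hq0 : 0 < q) (hq1 : q < 1) (a : ℤ) {J : ℕ} (hJ : J ≠ 0) :
    ∃ c : ℂ, c ≠ 0 ∧ E0dag q (fvec q a (-q) (-q ^ J)) = c • fvec q (a + 1) (-q) (-q ^ (J + 1)) := by
  have htne : -q ^ J ≠ 0 := neg_ne_zero.2 (pow_pos hq0 J).ne'
  refine ⟨(((q - q⁻¹)⁻¹ * (Real.sign (-q ^ J) * K0eig q (a + 1) (-q) (-q ^ J) *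
    √(1 + kappa (-q ^ J))) : ℝ) : ℂ), ?_, ?_⟩
  · refine Complex.ofReal_ne_zero.2 (mul_ne_zero (inv_ne_zero (sub_inv_ne_zero_of_lt_one hq0 hq1))
      (mul_ne_zero (mul_ne_zero ?_ (K0eig_pos hq0 _ (neg_ne_zero.2 hq0.ne') htne).ne')
        (sqrt_one_add_kappa_neg_pow_pos hq0 hq1 hJ).ne'))
    exact fun h => htne (Real.sign_eq_zero_iff.1 h)
  · rw [E0dag_fvec hq0, neg_div, div_self hq0.ne', kappa_neg_one, add_neg_cancel, Real.sqrt_zero,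
      mul_zero, Complex.ofReal_zero, zero_smul, sub_zero, smul_smul, ← Complex.ofReal_mul,
      show q * -q ^ J = -q ^ (J + 1) by ring]

theorem E0dag_pow_fvec_neg_q_neg_pow (hq0 : 0 < q) (hq1 : q < 1) (a : ℤ) (l : ℕ) {J : ℕ}
    (hJ : J ≠ 0) : ∃ c : ℂ, c ≠ 0 ∧
      (E0dag q ^ l) (fvec q a (-q) (-q ^ J)) = c • fvec q (a + l) (-q) (-q ^ (J + l)) := by
  induction l with
  | zero => exact ⟨1, one_ne_zero, by simp⟩
  | succ l ih =>
    obtain ⟨c, hc, h⟩ := ih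
    obtain ⟨d, hd, hstep⟩ := E0dag_fvec_neg_q_neg_pow hq0 hq1 (a + l) (J := J + l) (by omega)
    refine ⟨d * c, mul_ne_zero hd hc, ?_⟩
    rw [pow_succ', Module.End.mul_apply, h, map_smul, hstep, smul_smul, mul_comm, Nat.cast_succ,
      ← add_assoc, ← add_assoc]

theorem E0_fvec_neg_pow_neg_pow (hq0 : 0 < q) (hq1 : q < 1) (a : ℤ) (k j : ℕ) :
    ∃ c : ℂ, c ≠ 0 ∧ ∃ r ∈ supportedAbsTGe q (q ^ j),
      E0 q (fvec q a (-q ^ (k + 1)) (-q ^ (j + 1))) =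
        c • fvec q (a - 1) (-q ^ (k + 2)) (-q ^ (j + 1)) + r := by
  have hpne : -q ^ (k + 1) ≠ 0 := neg_ne_zero.2 (pow_pos hq0 _).ne'
  have htne : -q ^ (j + 1) ≠ 0 := neg_ne_zero.2 (pow_pos hq0 _).ne'
  refine ⟨-(((q - q⁻¹)⁻¹ * (Real.sign (-q ^ (k + 1)) * (K0eig q (a - 1) (-q ^ (k + 1))
    (-q ^ (j + 1)))⁻¹ * √(1 + kappa (-q ^ (k + 1)))) : ℝ) : ℂ), ?_, ?_⟩
  · refine neg_ne_zero.2 <| Complex.ofReal_ne_zero.2 (mul_ne_zero (inv_ne_zero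
      (sub_inv_ne_zero_of_lt_one hq0 hq1)) (mul_ne_zero (mul_ne_zero ?_
        (inv_ne_zero (K0eig_pos hq0 _ hpne htne).ne'))
        (sqrt_one_add_kappa_neg_pow_pos hq0 hq1 k.succ_ne_zero).ne'))
    exact fun h => hpne (Real.sign_eq_zero_iff.1 h)
  have ht : -q ^ (j + 1) / q = -q ^ j := by
    rw [pow_succ, neg_div, mul_div_cancel_right₀ _ hq0.ne']
  refine ⟨((q - q⁻¹)⁻¹ : ℝ) • ((Real.sign (-q ^ (j + 1)) * K0eig q (a - 1) (-q ^ (k + 1))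
    (-q ^ (j + 1)) * √(1 + kappa (-q ^ (j + 1) / q)) : ℝ) : ℂ) •
      fvec q (a - 1) (-q ^ (k + 1)) (-q ^ (j + 1) / q), ?_, ?_⟩
  · refine Submodule.smul_mem _ _ (Submodule.smul_mem _ _ (fvec_mem_supportedAbsTGe _ _ ?_))
    rw [ht, abs_neg, abs_of_pos (pow_pos hq0 j)]
  · rw [E0_fvec hq0, show q * -q ^ (k + 1) = -q ^ (k + 2) by ring]
    push_cast
    module

theorem E0_pow_fvec_neg_q_neg_pow (hq0 : 0 < q) (hq1 : q < 1) (a : ℤ) (k j : ℕ) :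
    ∃ c : ℂ, c ≠ 0 ∧ ∃ r ∈ supportedAbsTGe q (q ^ j),
      (E0 q ^ k) (fvec q a (-q) (-q ^ (j + 1))) =
        c • fvec q (a - k) (-q ^ (k + 1)) (-q ^ (j + 1)) + r := by
  induction k with
  | zero => exact ⟨1, one_ne_zero, 0, zero_mem _, by simp⟩
  | succ k ih =>
    obtain ⟨c, hc, r, hr, h⟩ := ih
    obtain ⟨d, hd, r', hr', hstep⟩ := E0_fvec_neg_pow_neg_pow hq0 hq1 (a - k) k j
    refine ⟨d * c, mul_ne_zero hd hc, c • r' + E0 q r,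
      add_mem (Submodule.smul_mem _ _ hr') (E0_mem_supportedAbsTGe hq0 hq1.le hr), ?_⟩
    rw [pow_succ', Module.End.mul_apply, h, map_add, map_smul, hstep, Nat.cast_succ,
      ← sub_sub]
    module

noncomputable def pbwMonomial (q : ℝ) (i : ℤ × ℕ × ℕ) : Module.End ℂ (KSpace q) :=
  K0zpow q i.1 * E0 q ^ i.2.1 * E0dag q ^ i.2.2

theorem pbwMonomial_apply_fvec (hq0 : 0 < q) (hq1 : q < 1) (n k l : ℕ) :
    ∃ c : ℂ, c ≠ 0 ∧ ∀ m : ℤ, ∃ r ∈ supportedAbsTGe q (q ^ (n + l)),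
      pbwMonomial q (m, k, l) (fvec q 0 (-q) (-q ^ (n + 1))) =
        (c * (K0eig q (l - k) (-q ^ (k + 1)) (-q ^ (n + l + 1)) ^ m : ℝ)) •
          fvec q (l - k) (-q ^ (k + 1)) (-q ^ (n + l + 1)) + r := by
  obtain ⟨c₁, hc₁, h₁⟩ := E0dag_pow_fvec_neg_q_neg_pow hq0 hq1 0 l (J := n + 1) n.succ_ne_zero
  obtain ⟨c₂, hc₂, r, hr, h₂⟩ := E0_pow_fvec_neg_q_neg_pow hq0 hq1 l k (n + l)
  rw [zero_add, add_right_comm] at h₁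
  refine ⟨c₁ * c₂, mul_ne_zero hc₁ hc₂, fun m => ⟨c₁ • K0zpow q m r,
    Submodule.smul_mem _ _ (K0zpow_mem_supportedAbsTGe m hr), ?_⟩⟩
  rw [pbwMonomial, Module.End.mul_apply, Module.End.mul_apply, h₁, map_smul, h₂, map_smul, map_add,
    map_smul, K0zpow_fvec]
  module

def testIndex (q : ℝ) (k L n : ℕ) : ℤ × Iq q × Iq q :=
  ((L : ℤ) - k, ⟨-q ^ (k + 1), neg_pow_succ_mem_Iq k⟩, ⟨-q ^ (n + L + 1), neg_pow_succ_mem_Iq _⟩)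

theorem apply_testIndex_of_mem_supportedAbsTGe (hq0 : 0 < q) (hq1 : q < 1) {n k L l : ℕ}
    (hl : l ≤ L) {r : KSpace q} (hr : r ∈ supportedAbsTGe q (q ^ (n + l))) :
    r (testIndex q k L n) = 0 := by
  refine Finsupp.notMem_support_iff.1 fun hmem => ?_
  have hle : q ^ (n + l) ≤ |-q ^ (n + L + 1)| := hr hmem
  rw [abs_neg, abs_of_pos (pow_pos hq0 _)] at hle
  exact hle.not_gt (pow_lt_pow_right_of_lt_one₀ hq0 hq1 (by omega))

theorem pbwMonomial_apply_fvec_testIndex (hq0 : 0 < q) (hq1 : q < 1) (n k L : ℕ) :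
    ∃ c : ℂ, c ≠ 0 ∧ ∀ (m : ℤ) (k' l' : ℕ), l' ≤ L →
      pbwMonomial q (m, k', l') (fvec q 0 (-q) (-q ^ (n + 1))) (testIndex q k L n) =
        if (k', l') = (k, L) then
          c * (K0eig q (L - k) (-q ^ (k + 1)) (-q ^ (n + L + 1)) ^ m : ℝ) else 0 := by
  obtain ⟨c, hc, hT⟩ := pbwMonomial_apply_fvec hq0 hq1 n k L
  refine ⟨c, hc, fun m k' l' hl => ?_⟩
  split_ifs with h
  · obtain ⟨rfl, rfl⟩ := Prod.mk.inj h
    obtain ⟨r, hr, he⟩ := hT m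
    rw [he, Finsupp.add_apply, apply_testIndex_of_mem_supportedAbsTGe hq0 hq1 hl hr,
      Finsupp.smul_apply, fvec_of_mem _ (neg_pow_succ_mem_Iq _) (neg_pow_succ_mem_Iq _)]
    simp [testIndex]
  · obtain ⟨c', -, hT'⟩ := pbwMonomial_apply_fvec hq0 hq1 n k' l'
    obtain ⟨r, hr, he⟩ := hT' m
    rw [he, Finsupp.add_apply, apply_testIndex_of_mem_supportedAbsTGe hq0 hq1 hl hr,
      Finsupp.smul_apply, fvec_of_mem _ (neg_pow_succ_mem_Iq _) (neg_pow_succ_mem_Iq _),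
      Finsupp.single_apply, if_neg, smul_zero, add_zero]
    intro heq
    simp only [testIndex, Prod.mk.injEq, Subtype.mk.injEq, neg_inj] at heq
    have hk := pow_right_injective₀ hq0 hq1.ne heq.2.1
    have hl := pow_right_injective₀ hq0 hq1.ne heq.2.2
    exact h (by simp_all)

theorem sum_pbwMonomial_coeff_mul_pow_eq_zero (hq0 : 0 < q) (hq1 : q < 1)
    {g : ℤ × ℕ × ℕ →₀ ℂ} (hg : Finsupp.linearCombination ℂ (pbwMonomial q) g = 0) {k L : ℕ}
    (hmax : ∀ i ∈ g.support, i.2.2 ≤ L) (n : ℕ) :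
    ∑ i ∈ g.support.filter (·.2 = (k, L)),
      (g i * (K0eig q (L - k) (-q ^ (k + 1)) (-q ^ (L + 1)) ^ i.1 : ℝ)) *
        ((√q ^ (-i.1) : ℝ) : ℂ) ^ n = 0 := by
  obtain ⟨c, hc, heval⟩ := pbwMonomial_apply_fvec_testIndex hq0 hq1 n k L
  have h0 := congrArg (fun A => A (fvec q 0 (-q) (-q ^ (n + 1))) (testIndex q k L n)) hg
  simp only [Finsupp.linearCombination_apply, Finsupp.sum, LinearMap.sum_apply,
    LinearMap.smul_apply, Finsupp.finsetSum_apply, Finsupp.smul_apply, smul_eq_mul,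
    LinearMap.zero_apply, Finsupp.coe_zero, Pi.zero_apply] at h0
  refine (mul_eq_zero.1 ?_).resolve_left hc
  rw [← h0, Finset.mul_sum, Finset.sum_filter]
  refine Finset.sum_congr rfl fun ⟨m, k', l'⟩ hi => ?_
  rw [heval m k' l' (hmax _ hi), K0eig_neg_pow_zpow hq0]
  dsimp only
  split_ifs
  · push_cast
    ring
  · simp

theorem linearIndependent_pbwMonomial (hq0 : 0 < q) (hq1 : q < 1) :
    LinearIndependent ℂ (pbwMonomial q) := by
  unfold LinearIndependent
  refine (injective_iff_map_eq_zero _).2 fun g hg => ?_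
  by_contra hg0
  obtain ⟨⟨m₀, k, L⟩, hi₀, hmax⟩ :=
    g.support.exists_max_image (·.2.2) (Finsupp.support_nonempty_iff.2 hg0)
  have hz : Set.InjOn (fun i : ℤ × ℕ × ℕ => ((√q ^ (-i.1) : ℝ) : ℂ))
      (g.support.filter (·.2 = (k, L))) := by
    intro i hi j hj hij
    have hW1 : √q ≠ 1 := fun h => hq1.ne (Real.sqrt_eq_one.1 h)
    refine Prod.ext (neg_injective (zpow_right_injective₀ (Real.sqrt_pos.2 hq0) hW1
      (Complex.ofReal_injective hij))) ?_
    exact (Finset.mem_filter.1 hi).2.trans (Finset.mem_filter.1 hj).2.symm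
  have h₀ := eq_zero_of_forall_sum_mul_pow_eq_zero hz
    (sum_pbwMonomial_coeff_mul_pow_eq_zero hq0 hq1 hg hmax) (Finset.mem_filter.2 ⟨hi₀, rfl⟩)
  have hμ := K0eig_pos hq0 (L - k) (neg_ne_zero.2 (pow_pos hq0 (k + 1)).ne')
    (neg_ne_zero.2 (pow_pos hq0 (L + 1)).ne')
  exact Finsupp.mem_support_iff.1 hi₀
    ((mul_eq_zero.1 h₀).resolve_right (Complex.ofReal_ne_zero.2 (zpow_ne_zero _ hμ.ne')))

end

theorem stmt0 (q : ℝ) (hq0 : 0 < q) (hq1 : q < 1) :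
    -- (a) `K₀` is invertible and `K₀E₀ = q·E₀K₀`
    (K0inv q * K0 q = 1 ∧ K0 q * K0inv q = 1) ∧
    K0 q * E0 q = (q : ℂ) • (E0 q * K0 q) ∧
    -- (b) `E₀†E₀ − E₀E₀† = (K₀² − K₀⁻²)/(q − q⁻¹)`
    E0dag q * E0 q - E0 q * E0dag q =
      ((q : ℂ) - (q : ℂ)⁻¹)⁻¹ • (K0 q ^ 2 - K0inv q ^ 2) ∧
    -- (c) the operators `K₀^m E₀^k (E₀†)^l` are linearly independent over `ℂ`
    LinearIndependent ℂ fun i : ℤ × ℕ × ℕ =>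
      K0zpow q i.1 * E0 q ^ i.2.1 * E0dag q ^ i.2.2 :=
  ⟨⟨K0inv_mul_K0 hq0, K0_mul_K0inv hq0⟩, K0_mul_E0 hq0,
    E0dag_mul_E0_sub_E0_mul_E0dag hq0 hq1, linearIndependent_pbwMonomial hq0 hq1⟩
end

section
/- Let H be a complex Hilbert space, let A be a densely defined self-adjoint operator in H, and let U ∈ B(H) be a partial isometry whose final projection Q = UU* commutes with A in the sense QA ⊆ AQ. Then the operator U*AU, defined on the domain {v ∈ H : Uv ∈ D(A)}, is densely defined and self-adjoint. -/
open scoped InnerProductSpace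

private lemma pmap_congr_aux {H : Type*} [NormedAddCommGroup H] [InnerProductSpace ℂ H]
    {f g : H →ₗ.[ℂ] H} (h : f = g) {x : H} (hx : x ∈ f.domain) (hx' : x ∈ g.domain) :
    f ⟨x, hx⟩ = g ⟨x, hx'⟩ := by subst h; rfl

set_option maxHeartbeats 1000000 in
theorem stmt19 {H : Type*} [NormedAddCommGroup H] [InnerProductSpace ℂ H]
    [CompleteSpace H]
    -- `A` is a densely defined self-adjoint operator in `H`
    (A : H →ₗ.[ℂ] H) (hA_dense : Dense (A.domain : Set H))
    (hA_sa : A.adjoint = A)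
    -- `U` is a partial isometry: `U*U` is an (orthogonal) projection
    (U : H →L[ℂ] H)
    (hU : (ContinuousLinearMap.adjoint U ∘L U) ∘L (ContinuousLinearMap.adjoint U ∘L U) =
      ContinuousLinearMap.adjoint U ∘L U)
    -- the final projection `Q = UU*` commutes with `A`: `QA ⊆ AQ`
    (hQA : ∀ (v : H) (hv : v ∈ A.domain),
      ∃ hv' : U (ContinuousLinearMap.adjoint U v) ∈ A.domain,
        A ⟨U (ContinuousLinearMap.adjoint U v), hv'⟩ =
          U (ContinuousLinearMap.adjoint U (A ⟨v, hv⟩))) :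
    -- then `U*AU`, defined on `{v | Uv ∈ D(A)}`, is densely defined and self-adjoint
    ∃ B : H →ₗ.[ℂ] H,
      B.domain = Submodule.comap (U : H →ₗ[ℂ] H) A.domain ∧
      (∀ (v : H) (hv : U v ∈ A.domain) (hv' : v ∈ B.domain),
        B ⟨v, hv'⟩ = ContinuousLinearMap.adjoint U (A ⟨U v, hv⟩)) ∧
      Dense (B.domain : Set H) ∧ B.adjoint = B := by
  classical
  set V := ContinuousLinearMap.adjoint U with hV
  have hVl : ∀ (x : H) (y : H), ⟪V y, x⟫_ℂ = ⟪y, U x⟫_ℂ := fun x y =>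
    ContinuousLinearMap.adjoint_inner_left U x y
  have hVr : ∀ (x : H) (y : H), ⟪x, V y⟫_ℂ = ⟪U x, y⟫_ℂ := fun x y =>
    ContinuousLinearMap.adjoint_inner_right U x y
  -- `U U* U = U` and `U* U U* = U*`
  have hP : ∀ x, V (U (V (U x))) = V (U x) := fun x => DFunLike.congr_fun hU x
  have hUVU : ∀ x, U (V (U x)) = U x := by
    intro x
    have h1 : V (U (V (U x) - x)) = 0 := by
      rw [map_sub, map_sub, hP x, sub_self]
    have h2 : (⟪U (V (U x) - x), U (V (U x) - x)⟫_ℂ) = 0 := by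
      rw [← hVl, h1, inner_zero_left]
    have h3 : U (V (U x) - x) = 0 := inner_self_eq_zero.mp h2
    rw [map_sub, sub_eq_zero] at h3
    exact h3
  have hUVUc : U ∘L (V ∘L U) = U := by
    ext x
    exact hUVU x
  have hVUV : ∀ x, V (U (V x)) = V x := by
    have := congrArg ContinuousLinearMap.adjoint hUVUc
    rw [ContinuousLinearMap.adjoint_comp, ContinuousLinearMap.adjoint_comp,
      ContinuousLinearMap.adjoint_adjoint] at this
    rw [← hV] at this
    intro x
    exact DFunLike.congr_fun this x
  -- membership facts
  have hQmem : ∀ v ∈ A.domain, U (V v) ∈ A.domain := fun v hv => (hQA v hv).1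
  set D : Submodule ℂ H := Submodule.comap (U : H →ₗ[ℂ] H) A.domain with hD
  have hmemD : ∀ v : H, v ∈ D ↔ U v ∈ A.domain := fun v => Iff.rfl
  -- the operator B
  set g : D →ₗ[ℂ] A.domain :=
    LinearMap.codRestrict A.domain ((U : H →ₗ[ℂ] H).domRestrict D) (fun v => v.2) with hg
  set B : H →ₗ.[ℂ] H := ⟨D, V.toLinearMap.comp (A.toFun.comp g)⟩ with hB
  have hBdom : B.domain = D := rfl
  have hBapp : ∀ (v : H) (hv : U v ∈ A.domain) (hv' : v ∈ B.domain),
      B ⟨v, hv'⟩ = V (A ⟨U v, hv⟩) := fun v hv hv' => rfl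
  -- symmetry of A
  have hAsym : ∀ x y : A.domain, ⟪A x, (y : H)⟫_ℂ = ⟪(x : H), A y⟫_ℂ := by
    have h := A.adjoint_isFormalAdjoint hA_dense
    rw [hA_sa] at h
    exact h
  -- density of D
  have hD_dense : Dense (D : Set H) := by
    intro x
    have hx1 : x - V (U x) ∈ D := by
      rw [hmemD, map_sub, hUVU, sub_self]
      exact A.domain.zero_mem
    have hmaps : Set.MapsTo V (A.domain : Set H) (D : Set H) := fun a ha => by
      simp only [SetLike.mem_coe] at *
      exact hQmem a ha
    have hx2 : V (U x) ∈ closure (D : Set H) :=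
      map_mem_closure V.continuous (hA_dense (U x)) hmaps
    have hx3 : (x - V (U x)) + V (U x) ∈ closure (D : Set H) := by
      have h1 : x - V (U x) ∈ D.topologicalClosure := D.le_topologicalClosure hx1
      have h2 : V (U x) ∈ D.topologicalClosure := hx2
      exact D.topologicalClosure.add_mem h1 h2
    rwa [sub_add_cancel] at hx3
  -- B is symmetric
  have hsym : B.IsFormalAdjoint B := by
    intro x y
    rcases x with ⟨x, hx⟩
    rcases y with ⟨y, hy⟩
    rw [hBapp x hx hx, hBapp y hy hy, hVl, hVr]
    exact hAsym ⟨U x, hx⟩ ⟨U y, hy⟩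
  have hle : B ≤ B.adjoint := hsym.le_adjoint hD_dense
  -- the reverse inclusion
  have hform := B.adjoint_isFormalAdjoint hD_dense
  have hge : B.adjoint ≤ B := by
    have key : ∀ (w : H) (hw : w ∈ B.adjoint.domain),
        ∀ x : A.domain, ⟪U (B.adjoint ⟨w, hw⟩), (x : H)⟫_ℂ = ⟪U w, A x⟫_ℂ := by
      intro w hw x
      rcases x with ⟨x, hx⟩
      have hVx : V x ∈ D := by rw [hmemD]; exact hQmem x hx
      have hBVx : B ⟨V x, hVx⟩ = V (A ⟨x, hx⟩) := by
        rw [hBapp (V x) (hQmem x hx) hVx]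
        rcases hQA x hx with ⟨h1, h2⟩
        have : A ⟨U (V x), hQmem x hx⟩ = U (V (A ⟨x, hx⟩)) := h2
        rw [this, hVUV]
      calc ⟪U (B.adjoint ⟨w, hw⟩), x⟫_ℂ
          = ⟪B.adjoint ⟨w, hw⟩, V x⟫_ℂ := by rw [hVr]
        _ = ⟪B.adjoint ⟨w, hw⟩, ((⟨V x, hVx⟩ : B.domain) : H)⟫_ℂ := rfl
        _ = ⟪w, B ⟨V x, hVx⟩⟫_ℂ := hform ⟨w, hw⟩ ⟨V x, hVx⟩
        _ = ⟪w, V (A ⟨x, hx⟩)⟫_ℂ := by rw [hBVx]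
        _ = ⟪U w, A ⟨x, hx⟩⟫_ℂ := by rw [hVr]
    -- domain inclusion
    have hdomle : B.adjoint.domain ≤ B.domain := by
      intro w hw
      have hUw : U w ∈ A.adjoint.domain :=
        LinearPMap.mem_adjoint_domain_of_exists _
          ⟨U (B.adjoint ⟨w, hw⟩), key w hw⟩
      rw [hA_sa] at hUw
      exact hUw
    refine ⟨hdomle, ?_⟩
    rintro ⟨w, hw⟩ ⟨w', hw'⟩ hww
    obtain rfl : w = w' := hww
    -- `z := B.adjoint ⟨w, hw⟩` satisfies `V (U z) = z`
    set z := B.adjoint ⟨w, hw⟩ with hz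
    have hzP : V (U z) = z := by
      have h1 : ∀ x : B.domain, ⟪V (U z), (x : H)⟫_ℂ = ⟪w, B x⟫_ℂ := by
        rintro ⟨v, hv⟩
        have hVUv : V (U v) ∈ D := by
          rw [hmemD, hUVU]
          exact hv
        have hBVUv : B ⟨V (U v), hVUv⟩ = B ⟨v, hv⟩ := by
          have e : (⟨U (V (U v)), (hUVU v).symm ▸ hv⟩ : A.domain) = ⟨U v, hv⟩ :=
            Subtype.ext (hUVU v)
          rw [hBapp (V (U v)) ((hUVU v).symm ▸ hv) hVUv, hBapp v hv hv, e]
        calc ⟪V (U z), v⟫_ℂ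
            = ⟪U z, U v⟫_ℂ := by rw [hVl]
          _ = ⟪z, V (U v)⟫_ℂ := by rw [hVr]
          _ = ⟪z, ((⟨V (U v), hVUv⟩ : B.domain) : H)⟫_ℂ := rfl
          _ = ⟪w, B ⟨V (U v), hVUv⟩⟫_ℂ := hform ⟨w, hw⟩ ⟨V (U v), hVUv⟩
          _ = ⟪w, B ⟨v, hv⟩⟫_ℂ := by rw [hBVUv]
      rw [hz]
      exact (LinearPMap.adjoint_apply_eq hD_dense ⟨w, hw⟩ h1).symm
    -- identify the values
    have hUw' : U w ∈ A.adjoint.domain :=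
      LinearPMap.mem_adjoint_domain_of_exists _ ⟨U z, key w hw⟩
    have hUw : U w ∈ A.domain := by rw [hA_sa] at hUw'; exact hUw'
    have hAval : A ⟨U w, hUw⟩ = U z := by
      have h1 : A.adjoint ⟨U w, hUw'⟩ = U z :=
        LinearPMap.adjoint_apply_eq hA_dense ⟨U w, hUw'⟩ (key w hw)
      rw [← h1]
      exact (pmap_congr_aux hA_sa hUw' hUw).symm
    rw [hBapp w hUw hw', hAval, hzP]
  exact ⟨B, rfl, hBapp, hD_dense, le_antisymm hge hle⟩
end
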